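/- For every n ≥ 1 and all positive real numbers a₁,b₁,…,a_n,b_n, the linear cylindrical capacity of the box D·[−1,1]^{2n} = ∏_{i=1}^n ([−a_i,a_i]×[−b_i,b_i]) (where D = diag(a₁,b₁,…,a_n,b_n)) satisfies c^Z_lin(D·[−1,1]^{2n}) ≤ 2π·min_{1≤i≤n} a_i b_i. -/

import Mathlib

open MeasureTheory Metric
open scoped BigOperators

noncomputable section

/-- A convex body: compact convex set with nonempty interior. -/
def IsConvexBody {d : ℕ} (K : Set (EuclideanSpace ℝ (Fin d))) : Prop :=
  IsCompact K ∧ Convex ℝ K ∧ (interior K).Nonempty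

/-- The standard symplectic form on `ℝ^{2n}` with coordinates ordered
`(x₁, y₁, …, xₙ, yₙ)`: `ω = ∑ dxⱼ ∧ dyⱼ`. -/
def symplForm (n : ℕ) (u v : EuclideanSpace ℝ (Fin (2 * n))) : ℝ :=
  ∑ j : Fin n,
    (u ⟨2 * (j : ℕ), by have := j.isLt; omega⟩ * v ⟨2 * (j : ℕ) + 1, by have := j.isLt; omega⟩
      - u ⟨2 * (j : ℕ) + 1, by have := j.isLt; omega⟩ * v ⟨2 * (j : ℕ), by have := j.isLt; omega⟩)

/-- A linear map of `ℝ^{2n}` is symplectic if it preserves the standard symplectic form. -/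
def IsLinearSymplectic (n : ℕ)
    (S : EuclideanSpace ℝ (Fin (2 * n)) →ₗ[ℝ] EuclideanSpace ℝ (Fin (2 * n))) : Prop :=
  ∀ u v, symplForm n (S u) (S v) = symplForm n u v

/-- The `k`-th coordinate of a vector (with value `0` if `k` is out of range). -/
def coordOr {m : ℕ} (x : EuclideanSpace ℝ (Fin m)) (k : ℕ) : ℝ :=
  if h : k < m then x ⟨k, h⟩ else 0

/-- The open symplectic cylinder `Z(r) = {x : x₁² + x₂² < r²}`. -/
def symplCylinder (n : ℕ) (r : ℝ) : Set (EuclideanSpace ℝ (Fin (2 * n))) :=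
  {x | coordOr x 0 ^ 2 + coordOr x 1 ^ 2 < r ^ 2}

/-- The linear cylindrical capacity. -/
def linCylCapacity (n : ℕ) (U : Set (EuclideanSpace ℝ (Fin (2 * n)))) : ℝ :=
  sInf {c : ℝ | ∃ r : ℝ, 0 < r ∧ c = Real.pi * r ^ 2 ∧
    ∃ S : EuclideanSpace ℝ (Fin (2 * n)) →ₗ[ℝ] EuclideanSpace ℝ (Fin (2 * n)),
      IsLinearSymplectic n S ∧ S '' U ⊆ symplCylinder n r}

/-- The linear symplectic radius. -/
def linSymplRadius (n : ℕ) (U : Set (EuclideanSpace ℝ (Fin (2 * n)))) : ℝ :=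
  sSup {c : ℝ | ∃ r : ℝ, 0 < r ∧ c = Real.pi * r ^ 2 ∧
    ∃ S : EuclideanSpace ℝ (Fin (2 * n)) →ₗ[ℝ] EuclideanSpace ℝ (Fin (2 * n)),
      IsLinearSymplectic n S ∧ S '' (closedBall (0 : EuclideanSpace ℝ (Fin (2 * n))) r) ⊆ U}

/-- The standard complex structure `J` on `ℝ^{2n}`, sending
`(x₁,y₁,…,xₙ,yₙ)` to `(−y₁,x₁,…,−yₙ,xₙ)`. -/
def Jstd (n : ℕ) (x : EuclideanSpace ℝ (Fin (2 * n))) : EuclideanSpace ℝ (Fin (2 * n)) :=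
  WithLp.toLp 2 fun i => if h : (i : ℕ) % 2 = 0
    then - x ⟨(i : ℕ) + 1, by have := i.isLt; omega⟩
    else x ⟨(i : ℕ) - 1, by have := i.isLt; omega⟩

/-- The support function `x ↦ sup_{y ∈ K} ⟨x, y⟩`. -/
def suppF {d : ℕ} (K : Set (EuclideanSpace ℝ (Fin d))) (x : EuclideanSpace ℝ (Fin d)) : ℝ :=
  sSup ((fun y => (inner ℝ x y : ℝ)) '' K)

/-- The sign vector `ε ∈ {−1/√(2n), 1/√(2n)}^{2n}` associated to `ε : Fin (2n) → Bool`. -/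
def signVec (n : ℕ) (ε : Fin (2 * n) → Bool) : EuclideanSpace ℝ (Fin (2 * n)) :=
  WithLp.toLp 2 fun i => (if ε i then 1 else -1) / Real.sqrt (2 * n)

/-- The normalized Rademacher average `s*(K)`. -/
def sStar (n : ℕ) (K : Set (EuclideanSpace ℝ (Fin (2 * n)))) : ℝ :=
  (1 / 2 ^ (2 * n)) * ∑ ε : Fin (2 * n) → Bool, suppF K (signVec n ε)

/-- The rotation-invariant probability measure on the unit sphere of `ℝ^{2n}`. -/
def sphereProb (n : ℕ) : Measure (sphere (0 : EuclideanSpace ℝ (Fin (2 * n))) 1) :=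
  ((volume : Measure (EuclideanSpace ℝ (Fin (2 * n)))).toSphere Set.univ)⁻¹ •
    (volume : Measure (EuclideanSpace ℝ (Fin (2 * n)))).toSphere

/-- Half the mean width `M*(K)`. -/
def mStar (n : ℕ) (K : Set (EuclideanSpace ℝ (Fin (2 * n)))) : ℝ :=
  ∫ x : sphere (0 : EuclideanSpace ℝ (Fin (2 * n))) 1, suppF K (x : EuclideanSpace ℝ (Fin (2 * n))) ∂(sphereProb n)

/-- The sign `±1` of a boolean. -/
def radSign (b : Bool) : ℝ := if b then 1 else -1

/-- Squared `L²({−1,1}^m, μ; X_K)`-norm of `f`, with respect to the norm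
(Minkowski gauge) whose unit ball is `K` and the uniform probability measure `μ`. -/
def radL2Sq {d : ℕ} (m : ℕ) (K : Set (EuclideanSpace ℝ (Fin d)))
    (f : (Fin m → Bool) → EuclideanSpace ℝ (Fin d)) : ℝ :=
  (1 / 2 ^ m) * ∑ t : Fin m → Bool, gauge K (f t) ^ 2

/-- The Rademacher projection `R_m f = ∑ᵢ (∫ f rᵢ dμ) rᵢ`. -/
def radProj {d : ℕ} (m : ℕ) (f : (Fin m → Bool) → EuclideanSpace ℝ (Fin d)) :
    (Fin m → Bool) → EuclideanSpace ℝ (Fin d) :=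
  fun t => ∑ i : Fin m,
    radSign (t i) • ((1 / 2 ^ m : ℝ) • ∑ s : Fin m → Bool, radSign (s i) • f s)

/-- The Rademacher projection (K-convexity) constant `‖Rad‖_{X_K}` of the normed
space whose unit ball is `K`: `sup_m ‖R_m‖`. -/
def radConst {d : ℕ} (K : Set (EuclideanSpace ℝ (Fin d))) : ℝ :=
  sSup {c : ℝ | ∃ m : ℕ, ∃ f : (Fin m → Bool) → EuclideanSpace ℝ (Fin d),
    radL2Sq m K f ≤ 1 ∧ c = Real.sqrt (radL2Sq m K (radProj m f))}

/-- Volume ratio `Vol(K)/Vol(B^{2n})`. -/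
def volRatio {d : ℕ} (K : Set (EuclideanSpace ℝ (Fin d))) : ℝ :=
  (volume K).toReal / (volume (closedBall (0 : EuclideanSpace ℝ (Fin d)) 1)).toReal


/-- The box `∏ᵢ ([−aᵢ,aᵢ] × [−bᵢ,bᵢ]) = D·[−1,1]^{2n}` for `D = diag(a₁,b₁,…,aₙ,bₙ)`. -/
def boxBody (n : ℕ) (a b : Fin n → ℝ) : Set (EuclideanSpace ℝ (Fin (2 * n))) :=
  {x | ∀ i : Fin (2 * n), |x i| ≤
    if (i : ℕ) % 2 = 0 then a ⟨(i : ℕ) / 2, by have := i.isLt; omega⟩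
    else b ⟨(i : ℕ) / 2, by have := i.isLt; omega⟩}

namespace St13aux


def pairPerm (n : ℕ) (π : Equiv.Perm (Fin n)) (k : Fin (2 * n)) : Fin (2 * n) :=
  ⟨2 * ((π ⟨(k : ℕ) / 2, by have := k.isLt; omega⟩ : Fin n) : ℕ) + (k : ℕ) % 2, by
    have := (π ⟨(k : ℕ) / 2, by have := k.isLt; omega⟩).isLt
    omega⟩

def wgt (l : ℝ) {n : ℕ} (k : Fin (2 * n)) : ℝ :=
  if (k : ℕ) / 2 = 0 then (if (k : ℕ) % 2 = 0 then l else l⁻¹) else 1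

def Slin (n : ℕ) (l : ℝ) (π : Equiv.Perm (Fin n)) :
    EuclideanSpace ℝ (Fin (2 * n)) →ₗ[ℝ] EuclideanSpace ℝ (Fin (2 * n)) where
  toFun x := WithLp.toLp 2 fun k => wgt l k * x (pairPerm n π k)
  map_add' x y := by ext k; simp [PiLp.add_apply]; ring
  map_smul' c x := by ext k; simp [PiLp.smul_apply]; ring

lemma Slin_apply (n : ℕ) (l : ℝ) (π : Equiv.Perm (Fin n))
    (x : EuclideanSpace ℝ (Fin (2 * n))) (k : Fin (2 * n)) :
    Slin n l π x k = wgt l k * x (pairPerm n π k) := rfl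

lemma pairPerm_even (n : ℕ) (π : Equiv.Perm (Fin n)) (j : Fin n) (h : 2 * (j : ℕ) < 2 * n) :
    pairPerm n π ⟨2 * (j : ℕ), h⟩ = ⟨2 * ((π j : Fin n) : ℕ), by have := (π j).isLt; omega⟩ := by
  have hj : (⟨(2 * (j : ℕ)) / 2, by omega⟩ : Fin n) = j :=
    Fin.ext (by show (2 * (j : ℕ)) / 2 = (j : ℕ); omega)
  apply Fin.ext
  simp [pairPerm, hj]

lemma pairPerm_odd (n : ℕ) (π : Equiv.Perm (Fin n)) (j : Fin n) (h : 2 * (j : ℕ) + 1 < 2 * n) :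
    pairPerm n π ⟨2 * (j : ℕ) + 1, h⟩ =
      ⟨2 * ((π j : Fin n) : ℕ) + 1, by have := (π j).isLt; omega⟩ := by
  have hj : (⟨(2 * (j : ℕ) + 1) / 2, by omega⟩ : Fin n) = j :=
    Fin.ext (by show (2 * (j : ℕ) + 1) / 2 = (j : ℕ); omega)
  apply Fin.ext
  simp [pairPerm, hj]


lemma isSympl (n : ℕ) (l : ℝ) (hl : l ≠ 0) (π : Equiv.Perm (Fin n)) :
    IsLinearSymplectic n (Slin n l π) := by
  intro u v
  unfold symplForm
  refine Fintype.sum_equiv π _ _ (fun j => ?_)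
  have h0 : 2 * (j : ℕ) < 2 * n := by have := j.isLt; omega
  have h1 : 2 * (j : ℕ) + 1 < 2 * n := by have := j.isLt; omega
  have hw0 : wgt l (⟨2 * (j : ℕ), h0⟩ : Fin (2 * n)) = if (j : ℕ) = 0 then l else 1 := by
    simp only [wgt]
    have h3 : (2 * (j : ℕ)) / 2 = (j : ℕ) := by omega
    have h2 : (2 * (j : ℕ)) % 2 = 0 := by omega
    simp [h3, h2]
  have hw1 : wgt l (⟨2 * (j : ℕ) + 1, h1⟩ : Fin (2 * n)) = if (j : ℕ) = 0 then l⁻¹ else 1 := by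
    simp only [wgt]
    have h3 : (2 * (j : ℕ) + 1) / 2 = (j : ℕ) := by omega
    have h2 : (2 * (j : ℕ) + 1) % 2 = 1 := by omega
    simp [h3, h2]
  show Slin n l π u ⟨2 * (j : ℕ), h0⟩ * Slin n l π v ⟨2 * (j : ℕ) + 1, h1⟩
      - Slin n l π u ⟨2 * (j : ℕ) + 1, h1⟩ * Slin n l π v ⟨2 * (j : ℕ), h0⟩
    = u ⟨2 * ((π j : Fin n) : ℕ), by have := (π j).isLt; omega⟩
        * v ⟨2 * ((π j : Fin n) : ℕ) + 1, by have := (π j).isLt; omega⟩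
      - u ⟨2 * ((π j : Fin n) : ℕ) + 1, by have := (π j).isLt; omega⟩
        * v ⟨2 * ((π j : Fin n) : ℕ), by have := (π j).isLt; omega⟩
  rw [Slin_apply, Slin_apply, Slin_apply, Slin_apply,
    pairPerm_even n π j h0, pairPerm_odd n π j h1, hw0, hw1]
  by_cases hj : (j : ℕ) = 0
  · simp only [if_pos hj]
    field_simp
  · simp only [if_neg hj]
    ring

lemma box_even (n : ℕ) (a b : Fin n → ℝ) (x : EuclideanSpace ℝ (Fin (2 * n)))
    (hx : x ∈ boxBody n a b) (i : Fin n) (h : 2 * (i : ℕ) < 2 * n) :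
    |x ⟨2 * (i : ℕ), h⟩| ≤ a i := by
  have hh := hx ⟨2 * (i : ℕ), h⟩
  rw [if_pos (show ((⟨2 * (i : ℕ), h⟩ : Fin (2 * n)) : ℕ) % 2 = 0 by
    show (2 * (i : ℕ)) % 2 = 0; omega)] at hh
  convert hh using 2
  exact Fin.ext (show (i : ℕ) = (2 * (i : ℕ)) / 2 by omega)

lemma box_odd (n : ℕ) (a b : Fin n → ℝ) (x : EuclideanSpace ℝ (Fin (2 * n)))
    (hx : x ∈ boxBody n a b) (i : Fin n) (h : 2 * (i : ℕ) + 1 < 2 * n) :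
    |x ⟨2 * (i : ℕ) + 1, h⟩| ≤ b i := by
  have hh := hx ⟨2 * (i : ℕ) + 1, h⟩
  rw [if_neg (show ¬ ((⟨2 * (i : ℕ) + 1, h⟩ : Fin (2 * n)) : ℕ) % 2 = 0 by
    show ¬ (2 * (i : ℕ) + 1) % 2 = 0; omega)] at hh
  convert hh using 2
  exact Fin.ext (show (i : ℕ) = (2 * (i : ℕ) + 1) / 2 by omega)

end St13aux

/-- `c^Z_lin(D·[−1,1]^{2n}) ≤ 2π·minᵢ aᵢbᵢ`. -/
theorem statement13 (n : ℕ) (hn : 1 ≤ n) (a b : Fin n → ℝ)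
    (ha : ∀ i, 0 < a i) (hb : ∀ i, 0 < b i) :
    linCylCapacity n (boxBody n a b) ≤
      2 * Real.pi * Finset.univ.inf' ⟨⟨0, hn⟩, Finset.mem_univ _⟩ (fun i => a i * b i) := by
  classical
  obtain ⟨i₀, -, hmin⟩ := Finset.exists_mem_eq_inf'
    (⟨⟨0, hn⟩, Finset.mem_univ _⟩ : (Finset.univ : Finset (Fin n)).Nonempty)
    (fun i => a i * b i)
  rw [hmin]
  have hA0 : 0 < a i₀ := ha i₀
  have hB0 : 0 < b i₀ := hb i₀
  have hπ := Real.pi_pos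
  apply le_of_forall_pos_le_add
  intro ε hε
  set l := Real.sqrt (b i₀ / a i₀) with hl
  have hl0 : 0 < l := Real.sqrt_pos.2 (div_pos hB0 hA0)
  have hlsq : l ^ 2 = b i₀ / a i₀ := Real.sq_sqrt (div_pos hB0 hA0).le
  have hlinv : (l⁻¹) ^ 2 = a i₀ / b i₀ := by
    rw [inv_pow, hlsq, inv_div]
  set r := Real.sqrt (2 * a i₀ * b i₀ + ε / Real.pi) with hr
  have hrpos0 : 0 < 2 * a i₀ * b i₀ + ε / Real.pi := by positivity
  have hr0 : 0 < r := Real.sqrt_pos.2 hrpos0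
  have hrsq : r ^ 2 = 2 * a i₀ * b i₀ + ε / Real.pi := Real.sq_sqrt hrpos0.le
  set π' : Equiv.Perm (Fin n) := Equiv.swap ⟨0, hn⟩ i₀ with hπ'
  have h02 : (0 : ℕ) < 2 * n := by omega
  have h12 : (1 : ℕ) < 2 * n := by omega
  have hi0 : 2 * (i₀ : ℕ) < 2 * n := by have := i₀.isLt; omega
  have hi1 : 2 * (i₀ : ℕ) + 1 < 2 * n := by have := i₀.isLt; omega
  have key : Real.pi * r ^ 2 ∈ {c : ℝ | ∃ r : ℝ, 0 < r ∧ c = Real.pi * r ^ 2 ∧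
      ∃ S : EuclideanSpace ℝ (Fin (2 * n)) →ₗ[ℝ] EuclideanSpace ℝ (Fin (2 * n)),
        IsLinearSymplectic n S ∧ S '' boxBody n a b ⊆ symplCylinder n r} := by
    refine ⟨r, hr0, rfl, St13aux.Slin n l π', St13aux.isSympl n l hl0.ne' π', ?_⟩
    rintro y ⟨x, hx, rfl⟩
    show coordOr (St13aux.Slin n l π' x) 0 ^ 2 + coordOr (St13aux.Slin n l π' x) 1 ^ 2 < r ^ 2
    unfold coordOr
    rw [dif_pos h02, dif_pos h12]
    have hz0 : (⟨0, h02⟩ : Fin (2 * n)) = ⟨2 * ((⟨0, hn⟩ : Fin n) : ℕ), by have h0' : ((⟨0, hn⟩ : Fin n) : ℕ) = 0 := rfl; omega⟩ :=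
      Fin.ext (by simp)
    have hz1 : (⟨1, h12⟩ : Fin (2 * n)) = ⟨2 * ((⟨0, hn⟩ : Fin n) : ℕ) + 1, by have h0' : ((⟨0, hn⟩ : Fin n) : ℕ) = 0 := rfl; omega⟩ :=
      Fin.ext (by simp)
    have hsw : π' ⟨0, hn⟩ = i₀ := Equiv.swap_apply_left _ _
    have hp0 : St13aux.pairPerm n π' ⟨2 * ((⟨0, hn⟩ : Fin n) : ℕ), by
          have h0' : ((⟨0, hn⟩ : Fin n) : ℕ) = 0 := rfl; omega⟩ = ⟨2 * (i₀ : ℕ), hi0⟩ := by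
      rw [St13aux.pairPerm_even n π' ⟨0, hn⟩]
      exact Fin.ext (by show 2 * ((π' ⟨0, hn⟩ : Fin n) : ℕ) = 2 * (i₀ : ℕ); rw [hsw])
    have hp1 : St13aux.pairPerm n π' ⟨2 * ((⟨0, hn⟩ : Fin n) : ℕ) + 1, by
          have h0' : ((⟨0, hn⟩ : Fin n) : ℕ) = 0 := rfl; omega⟩ = ⟨2 * (i₀ : ℕ) + 1, hi1⟩ := by
      rw [St13aux.pairPerm_odd n π' ⟨0, hn⟩]
      exact Fin.ext (by show 2 * ((π' ⟨0, hn⟩ : Fin n) : ℕ) + 1 = 2 * (i₀ : ℕ) + 1; rw [hsw])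
    have hw0 : St13aux.wgt l (⟨2 * ((⟨0, hn⟩ : Fin n) : ℕ), by
          have h0' : ((⟨0, hn⟩ : Fin n) : ℕ) = 0 := rfl; omega⟩ : Fin (2 * n)) = l := by
      simp [St13aux.wgt]
    have hw1 : St13aux.wgt l (⟨2 * ((⟨0, hn⟩ : Fin n) : ℕ) + 1, by
          have h0' : ((⟨0, hn⟩ : Fin n) : ℕ) = 0 := rfl; omega⟩ : Fin (2 * n)) = l⁻¹ := by
      simp [St13aux.wgt]
    rw [hz0, hz1, St13aux.Slin_apply, St13aux.Slin_apply, hp0, hp1, hw0, hw1]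
    have hxa : |x ⟨2 * (i₀ : ℕ), hi0⟩| ≤ a i₀ := St13aux.box_even n a b x hx i₀ hi0
    have hxb : |x ⟨2 * (i₀ : ℕ) + 1, hi1⟩| ≤ b i₀ := St13aux.box_odd n a b x hx i₀ hi1
    have ea : x ⟨2 * (i₀ : ℕ), hi0⟩ ^ 2 ≤ a i₀ ^ 2 :=
      sq_le_sq' (abs_le.1 hxa).1 (abs_le.1 hxa).2
    have eb : x ⟨2 * (i₀ : ℕ) + 1, hi1⟩ ^ 2 ≤ b i₀ ^ 2 :=
      sq_le_sq' (abs_le.1 hxb).1 (abs_le.1 hxb).2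
    have e1 : (l * x ⟨2 * (i₀ : ℕ), hi0⟩) ^ 2 ≤ a i₀ * b i₀ := by
      rw [mul_pow, hlsq]
      calc b i₀ / a i₀ * x ⟨2 * (i₀ : ℕ), hi0⟩ ^ 2 ≤ b i₀ / a i₀ * a i₀ ^ 2 :=
            mul_le_mul_of_nonneg_left ea (by positivity)
        _ = a i₀ * b i₀ := by field_simp
    have e2 : (l⁻¹ * x ⟨2 * (i₀ : ℕ) + 1, hi1⟩) ^ 2 ≤ a i₀ * b i₀ := by
      rw [mul_pow, hlinv]
      calc a i₀ / b i₀ * x ⟨2 * (i₀ : ℕ) + 1, hi1⟩ ^ 2 ≤ a i₀ / b i₀ * b i₀ ^ 2 :=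
            mul_le_mul_of_nonneg_left eb (by positivity)
        _ = a i₀ * b i₀ := by field_simp
    have hεπ : 0 < ε / Real.pi := div_pos hε hπ
    rw [hrsq]
    linarith
  have hbdd : BddBelow {c : ℝ | ∃ r : ℝ, 0 < r ∧ c = Real.pi * r ^ 2 ∧
      ∃ S : EuclideanSpace ℝ (Fin (2 * n)) →ₗ[ℝ] EuclideanSpace ℝ (Fin (2 * n)),
        IsLinearSymplectic n S ∧ S '' boxBody n a b ⊆ symplCylinder n r} := by
    refine ⟨0, ?_⟩
    rintro c ⟨r, hr, rfl, -⟩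
    positivity
  calc linCylCapacity n (boxBody n a b) ≤ Real.pi * r ^ 2 := csInf_le hbdd key
    _ = 2 * Real.pi * (a i₀ * b i₀) + ε := by
        rw [hrsq]
        field_simp


end
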